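/- There exist absolute constants c, C > 0 such that the following holds for every d, r ≥ 1, m ≥ 1, every teacher with ‖w_i*‖ ≤ w_max for all i, and every student W: if L(W) ≤ c · r² · w_max², then Σ_{j=1}^m ‖w_j‖² ≤ C · r · w_max. -/

import Mathlib

open MeasureTheory ProbabilityTheory Finset
open scoped Classical

noncomputable section

/-- Standard Gaussian measure `N(0, I_d)` on `ℝ^d`. -/
def stdG (d : ℕ) : Measure (Fin d → ℝ) := Measure.pi fun _ => gaussianReal 0 1

instance (d : ℕ) : IsProbabilityMeasure (stdG d) := by
  unfold stdG; infer_instance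

/-- Euclidean inner product on `ℝ^d`. -/
def dotp {d : ℕ} (w x : Fin d → ℝ) : ℝ := ∑ i, w i * x i

/-- Euclidean norm on `ℝ^d`. -/
def nrm {d : ℕ} (w : Fin d → ℝ) : ℝ := Real.sqrt (dotp w w)

/-- The angle (up to sign) between two vectors:
`∠(w,v) = arccos(|⟨w,v⟩| / (‖w‖‖v‖)) ∈ [0, π/2]`. -/
def ang {d : ℕ} (w v : Fin d → ℝ) : ℝ := Real.arccos (|dotp w v| / (nrm w * nrm v))

/-- The teacher network `f*(x) = ∑ᵢ |⟨wᵢ*, x⟩|`. -/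
def fStar {d r : ℕ} (ws : Fin r → Fin d → ℝ) (x : Fin d → ℝ) : ℝ := ∑ i, |dotp (ws i) x|

/-- The student network `f_W(x) = ∑ⱼ ‖wⱼ‖ |⟨wⱼ, x⟩|`. -/
def fStu {d m : ℕ} (W : Fin m → Fin d → ℝ) (x : Fin d → ℝ) : ℝ :=
  ∑ j, nrm (W j) * |dotp (W j) x|

/-- The population square loss `L(W) = (1/2) E_x[(f_W(x) - f*(x))²]`. -/
def loss {d r m : ℕ} (ws : Fin r → Fin d → ℝ) (W : Fin m → Fin d → ℝ) : ℝ :=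
  (1 / 2) * ∫ x, (fStu W x - fStar ws x) ^ 2 ∂(stdG d)

/-- The gradient `∇_{w_j} L(W) = E_x[R(x) ‖w_j‖ (I + w̄_j w̄_jᵀ) x · sgn(⟨w_j, x⟩)]`
(defined to be `0` when `w_j = 0`). -/
def gradL {d r m : ℕ} (ws : Fin r → Fin d → ℝ) (W : Fin m → Fin d → ℝ) (j : Fin m) :
    Fin d → ℝ :=
  if W j = 0 then 0 else fun k =>
    ∫ x, (fStu W x - fStar ws x) * nrm (W j) *
      (x k + (W j k / nrm (W j)) * (dotp (W j) x / nrm (W j))) * Real.sign (dotp (W j) x)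
      ∂(stdG d)

/-! A linear form `⟨w, x⟩` of the standard Gaussian is distributed as `‖w‖ Z` with `Z ~ N(0, 1)`,
so with `κ = 𝔼|Z| > 0` both networks have explicit means: `𝔼 f_W = κ ∑ ‖w_j‖²` and
`𝔼 f* = κ ∑ ‖w_i*‖ ≤ κ r w_max`. By Jensen, `𝔼(f_W - f*) ≤ √(2 L(W)) ≤ r w_max` once
`L(W) ≤ r² w_max² / 2`. Hence `κ ∑ ‖w_j‖² ≤ (1 + κ) r w_max`, i.e. `C = 1 + κ⁻¹` works. -/

lemma sq_integral_le_integral_sq {Ω : Type*} [MeasurableSpace Ω] {μ : Measure Ω}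
    [IsProbabilityMeasure μ] {f : Ω → ℝ} (hf : MemLp f 2 μ) :
    (∫ x, f x ∂μ) ^ 2 ≤ ∫ x, f x ^ 2 ∂μ := by
  have := variance_nonneg f μ
  rw [variance_eq_sub hf] at this
  exact sub_nonneg.1 this

def gaussianAbsMean : ℝ := ∫ y, |y| ∂gaussianReal 0 1

lemma gaussianAbsMean_pos : 0 < gaussianAbsMean := by
  have := nullSingletonClass_gaussianReal (μ := 0) one_ne_zero
  rw [gaussianAbsMean, integral_pos_iff_support_of_nonneg abs_nonneg
    ((memLp_id_gaussianReal 1).integrable le_rfl).abs]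
  have hsupp : Function.support (fun y : ℝ => |y|) = {0}ᶜ := by ext; simp
  simp [hsupp, prob_compl_eq_one_sub (measurableSet_singleton (0 : ℝ))]

section Projections

open WithLp

variable {d : ℕ}

lemma measurable_dotp (w : Fin d → ℝ) : Measurable (dotp w) := by
  unfold dotp; fun_prop

lemma dotp_eq_inner (w x : Fin d → ℝ) :
    dotp w x = inner ℝ (toLp 2 w) (toLp 2 x) := by
  simp [dotp, EuclideanSpace.inner_eq_star_dotProduct, dotProduct, mul_comm]

lemma nrm_nonneg (w : Fin d → ℝ) : 0 ≤ nrm w := Real.sqrt_nonneg _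

lemma nrm_eq_norm (w : Fin d → ℝ) : nrm w = ‖toLp 2 w‖ := by
  rw [nrm, EuclideanSpace.norm_eq]
  simp [dotp, sq]

lemma stdG_map_dotp (w : Fin d → ℝ) :
    (stdG d).map (dotp w) = (gaussianReal 0 1).map (nrm w * ·) := by
  have hL : dotp w = innerSL ℝ (toLp 2 w) ∘ toLp 2 := by
    ext x; simp [dotp_eq_inner]
  rw [hL, ← Measure.map_map (by fun_prop) (by fun_prop), stdG, map_pi_eq_stdGaussian,
    IsGaussian.map_eq_gaussianReal, integral_strongDual_stdGaussian,
    variance_dual_stdGaussian, innerSL_apply_norm, gaussianReal_map_const_mul, nrm_eq_norm]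
  congr 1
  · simp
  · ext; simp

lemma memLp_abs_dotp (w : Fin d → ℝ) : MemLp (fun x => |dotp w x|) 2 (stdG d) := by
  rw [← Function.comp_def (fun y : ℝ => |y|), ← memLp_map_measure_iff
    (by fun_prop) (measurable_dotp w).aemeasurable, stdG_map_dotp, gaussianReal_map_const_mul]
  exact (memLp_id_gaussianReal' 2 (by simp)).abs

lemma integral_abs_dotp (w : Fin d → ℝ) :
    ∫ x, |dotp w x| ∂(stdG d) = gaussianAbsMean * nrm w := by
  rw [← integral_map (f := fun y : ℝ => |y|) (measurable_dotp w).aemeasurable (by fun_prop),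
    stdG_map_dotp,
    integral_map (by fun_prop) (by fun_prop)]
  simp only [abs_mul]
  rw [integral_const_mul, abs_of_nonneg (nrm_nonneg w), gaussianAbsMean, mul_comm]

end Projections

section Networks

variable {d r m : ℕ}

lemma memLp_fStar (ws : Fin r → Fin d → ℝ) : MemLp (fStar ws) 2 (stdG d) :=
  memLp_finsetSum _ fun i _ => memLp_abs_dotp (ws i)

lemma memLp_fStu (W : Fin m → Fin d → ℝ) : MemLp (fStu W) 2 (stdG d) :=
  memLp_finsetSum _ fun j _ => (memLp_abs_dotp (W j)).const_mul _

lemma integral_fStar (ws : Fin r → Fin d → ℝ) :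
    ∫ x, fStar ws x ∂(stdG d) = gaussianAbsMean * ∑ i, nrm (ws i) := by
  simp only [fStar]
  rw [integral_finsetSum _ fun i _ => (memLp_abs_dotp (ws i)).integrable one_le_two,
    Finset.mul_sum]
  simp only [integral_abs_dotp]

lemma integral_fStu (W : Fin m → Fin d → ℝ) :
    ∫ x, fStu W x ∂(stdG d) = gaussianAbsMean * ∑ j, nrm (W j) ^ 2 := by
  simp only [fStu]
  rw [integral_finsetSum _ fun j _ => ((memLp_abs_dotp (W j)).integrable one_le_two).const_mul _,
    Finset.mul_sum]
  simp only [integral_const_mul, integral_abs_dotp]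
  congr 1; ext j; ring

end Networks

/-- Lemma B.4: if `L(W) ≤ c r² w_max²` then `∑ⱼ ‖wⱼ‖² ≤ C r w_max`. -/
theorem sum_norm_bound :
    ∃ c C : ℝ, 0 < c ∧ 0 < C ∧
    ∀ (d r m : ℕ), 1 ≤ r → 1 ≤ m →
    ∀ (ws : Fin r → Fin d → ℝ) (wmax : ℝ), (∀ i, nrm (ws i) ≤ wmax) →
    ∀ W : Fin m → Fin d → ℝ, loss ws W ≤ c * r ^ 2 * wmax ^ 2 →
      ∑ j, nrm (W j) ^ 2 ≤ C * r * wmax := by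
  have hκ := gaussianAbsMean_pos
  refine ⟨1 / 2, 1 + gaussianAbsMean⁻¹, by norm_num, by positivity, ?_⟩
  intro d r m hr _ ws wmax hws W hloss
  have hwmax : 0 ≤ wmax := (nrm_nonneg _).trans (hws ⟨0, hr⟩)
  have hresidual : ∫ x, fStu W x - fStar ws x ∂(stdG d) ≤ r * wmax := by
    have hsq : (∫ x, fStu W x - fStar ws x ∂(stdG d)) ^ 2
        ≤ ∫ x, (fStu W x - fStar ws x) ^ 2 ∂(stdG d) :=
      sq_integral_le_integral_sq ((memLp_fStu W).sub (memLp_fStar ws))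
    refine abs_le_of_sq_le_sq' (hsq.trans ?_) (by positivity) |>.2
    rw [loss] at hloss
    linarith
  have hteacher : ∫ x, fStar ws x ∂(stdG d) ≤ gaussianAbsMean * (r * wmax) := by
    rw [integral_fStar]
    gcongr
    exact (Finset.sum_le_sum fun i _ => hws i).trans_eq (by simp)
  rw [integral_sub ((memLp_fStu W).integrable one_le_two)
    ((memLp_fStar ws).integrable one_le_two), integral_fStu] at hresidual
  rw [← mul_le_mul_iff_right₀ hκ]
  calc gaussianAbsMean * ∑ j, nrm (W j) ^ 2 ≤ r * wmax + gaussianAbsMean * (r * wmax) := by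
        linarith
    _ = gaussianAbsMean * ((1 + gaussianAbsMean⁻¹) * r * wmax) := by
        field_simp; ring
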